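/- arXiv:1309.4239 — 2 statements merged into one kernel-verified Lean document; each statement's English description precedes it below -/
import Mathlib

section
/- Let A and B be real symmetric n×n matrices and suppose there exists an invertible real n×n matrix P with P A Pᵀ = B. Then A and B have the same number of strictly positive eigenvalues, the same number of strictly negative eigenvalues, and the same number of zero eigenvalues (counted with multiplicity). -/
open Polynomial Matrix Finset

namespace SylvesterAux

variable {n : ℕ}

/-- Charpoly is invariant under conjugation by a matrix with `U * star U = 1`. -/
lemma charpoly_conj (U A : Matrix (Fin n) (Fin n) ℝ) (hU : U * star U = 1) :
    (U * A * star U).charpoly = A.charpoly := by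
  have hU' : star U * U = 1 := mul_eq_one_comm.mp hU
  have hmap : (C : ℝ →+* ℝ[X]).mapMatrix U * (C : ℝ →+* ℝ[X]).mapMatrix (star U) = 1 := by
    rw [← RingHom.map_mul, hU, RingHom.map_one]
  have hch : charmatrix (U * A * star U)
      = (C : ℝ →+* ℝ[X]).mapMatrix U * charmatrix A * (C : ℝ →+* ℝ[X]).mapMatrix (star U) := by
    rw [charmatrix, charmatrix, mul_sub, sub_mul]
    congr 1
    · -- scalar part
      have : (Matrix.scalar (Fin n) (X : ℝ[X])) = (X : ℝ[X]) • (1 : Matrix (Fin n) (Fin n) ℝ[X]) := by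
        ext i j
        simp [Matrix.scalar_apply, Matrix.smul_apply, Matrix.one_apply, Matrix.diagonal_apply]
      rw [this, mul_smul_comm, smul_mul_assoc, mul_one, hmap]
    · rw [← RingHom.map_mul, ← RingHom.map_mul]
  have hmap' : (C : ℝ →+* ℝ[X]).mapMatrix (star U) * (C : ℝ →+* ℝ[X]).mapMatrix U = 1 := by
    rw [← RingHom.map_mul, hU', RingHom.map_one]
  rw [Matrix.charpoly, Matrix.charpoly, hch, det_mul, det_mul, mul_comm, ← mul_assoc,
    ← det_mul, hmap', det_one, one_mul]

/-- The roots of the characteristic polynomial of a hermitian real matrix are its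
eigenvalues. -/
lemma roots_charpoly (A : Matrix (Fin n) (Fin n) ℝ) (hA : A.IsHermitian) :
    A.charpoly.roots = Finset.univ.val.map hA.eigenvalues := by
  have hU : (hA.eigenvectorUnitary : Matrix (Fin n) (Fin n) ℝ) *
      star (hA.eigenvectorUnitary : Matrix (Fin n) (Fin n) ℝ) = 1 :=
    (Unitary.mem_iff.mp hA.eigenvectorUnitary.2).2
  have h1 : A.charpoly = (diagonal hA.eigenvalues).charpoly := by
    conv_lhs => rw [hA.spectral_theorem]
    rw [show RCLike.ofReal ∘ hA.eigenvalues = hA.eigenvalues by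
      simp [RCLike.ofReal_real_eq_id]]
    exact charpoly_conj _ _ hU
  rw [h1, charpoly_of_upperTriangular _ (blockTriangular_diagonal _)]
  have h2 : (∏ i : Fin n, (X - C (diagonal hA.eigenvalues i i)))
      = ((Finset.univ.val.map hA.eigenvalues).map fun a => X - C a).prod := by
    rw [Multiset.map_map]
    simp [Finset.prod, diagonal_apply_eq]
  rw [h2, roots_multiset_prod_X_sub_C]

/-- The span of the columns of `U` indexed by `S`. -/
noncomputable def eigSpan (U : Matrix (Fin n) (Fin n) ℝ) (S : Finset (Fin n)) :
    Submodule ℝ (Fin n → ℝ) :=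
  Submodule.span ℝ (Set.range fun i : S => U *ᵥ Pi.single (i : Fin n) 1)

set_option maxHeartbeats 1000000 in
lemma finrank_eigSpan (U : Matrix (Fin n) (Fin n) ℝ) (hU : U * star U = 1)
    (S : Finset (Fin n)) : Module.finrank ℝ (eigSpan U S) = S.card := by
  have hU' : star U * U = 1 := mul_eq_one_comm.mp hU
  have hinj : Function.Injective U.mulVecLin := by
    intro x y h
    have hx : star U *ᵥ (U *ᵥ x) = star U *ᵥ (U *ᵥ y) := by
      simpa [mulVecLin_apply] using congrArg (star U *ᵥ ·) h
    simpa [mulVec_mulVec, hU'] using hx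
  have li0 : LinearIndependent ℝ (fun i : Fin n => Pi.single i (1 : ℝ)) := by
    have h := (Pi.basisFun ℝ (Fin n)).linearIndependent
    rwa [show ⇑(Pi.basisFun ℝ (Fin n)) = fun i => Pi.single i (1 : ℝ) from
      funext fun i => Pi.basisFun_apply ℝ (Fin n) i] at h
  have li1 : LinearIndependent ℝ (fun i : S => (Pi.single (i : Fin n) (1 : ℝ) : Fin n → ℝ)) :=
    li0.comp (fun i : S => (i : Fin n)) Subtype.val_injective
  have li2 : LinearIndependent ℝ (fun i : S => U *ᵥ Pi.single (i : Fin n) 1) := by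
    have h := li1.map' U.mulVecLin (LinearMap.ker_eq_bot.mpr hinj)
    have he : (⇑U.mulVecLin ∘ fun i : S => (Pi.single (i : Fin n) (1 : ℝ) : Fin n → ℝ))
        = fun i : S => U *ᵥ Pi.single (i : Fin n) 1 := by
      funext i
      simp [mulVecLin_apply]
    rwa [he] at h
  rw [show eigSpan U S = Submodule.span ℝ
    (Set.range fun i : S => U *ᵥ Pi.single (i : Fin n) 1) from rfl,
    finrank_span_eq_card li2, Fintype.card_coe]

lemma eigSpan_coord_eq_zero (U : Matrix (Fin n) (Fin n) ℝ) (hU : U * star U = 1)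
    (S : Finset (Fin n)) {x : Fin n → ℝ} (hx : x ∈ eigSpan U S) :
    ∀ i ∉ S, (star U *ᵥ x) i = 0 := by
  have hU' : star U * U = 1 := mul_eq_one_comm.mp hU
  induction hx using Submodule.span_induction with
  | mem x hx =>
    obtain ⟨j, rfl⟩ := hx
    intro i hi
    rw [mulVec_mulVec, hU', one_mulVec]
    exact Pi.single_eq_of_ne (by rintro rfl; exact hi j.2) 1
  | zero => intro i _; simp
  | add x y _ _ hx hy => intro i hi; simp [mulVec_add, hx i hi, hy i hi]
  | smul c x _ hx => intro i hi; simp [mulVec_smul, hx i hi]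

lemma quad_eq (U : Matrix (Fin n) (Fin n) ℝ) (d : Fin n → ℝ) (x : Fin n → ℝ) :
    x ⬝ᵥ ((U * diagonal d * star U) *ᵥ x)
      = ∑ i, d i * ((star U *ᵥ x) i) ^ 2 := by
  have hsU : star U = Uᵀ := by
    rw [Matrix.star_eq_conjTranspose, conjTranspose_eq_transpose_of_trivial]
  have h1 : (U * diagonal d * star U) *ᵥ x = U *ᵥ (diagonal d *ᵥ (star U *ᵥ x)) := by
    rw [← mulVec_mulVec, ← mulVec_mulVec]
  rw [h1, dotProduct_mulVec]
  have h2 : x ᵥ* U = star U *ᵥ x := by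
    rw [hsU, mulVec_transpose]
  rw [h2, dotProduct]
  apply Finset.sum_congr rfl
  intro i _
  rw [mulVec_diagonal]
  ring

lemma nonzero_coord (U : Matrix (Fin n) (Fin n) ℝ) (hU : U * star U = 1)
    {x : Fin n → ℝ} (hx : x ≠ 0) : star U *ᵥ x ≠ 0 := by
  intro h
  apply hx
  have : U *ᵥ (star U *ᵥ x) = U *ᵥ 0 := by rw [h]
  simpa [mulVec_mulVec, hU] using this

/-- Key step: the number of positive eigenvalues can only decrease... in fact
one inequality of Sylvester's law. -/
lemma posCard_le (A B P : Matrix (Fin n) (Fin n) ℝ)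
    (hA : A.IsHermitian) (hB : B.IsHermitian) (hP : IsUnit P.det)
    (hcong : P * A * Pᵀ = B) :
    (Finset.univ.filter fun i => 0 < hB.eigenvalues i).card ≤
      (Finset.univ.filter fun i => 0 < hA.eigenvalues i).card := by
  classical
  by_contra hlt
  push_neg at hlt
  set UA : Matrix (Fin n) (Fin n) ℝ := (hA.eigenvectorUnitary : Matrix (Fin n) (Fin n) ℝ)
  set UB : Matrix (Fin n) (Fin n) ℝ := (hB.eigenvectorUnitary : Matrix (Fin n) (Fin n) ℝ)
  have hUA : UA * star UA = 1 := (Unitary.mem_iff.mp hA.eigenvectorUnitary.2).2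
  have hUB : UB * star UB = 1 := (Unitary.mem_iff.mp hB.eigenvectorUnitary.2).2
  have hAspec : A = UA * diagonal hA.eigenvalues * star UA := by
    conv_lhs => rw [hA.spectral_theorem]
    rw [show RCLike.ofReal ∘ hA.eigenvalues = hA.eigenvalues by
      simp [RCLike.ofReal_real_eq_id]]
    exact Unitary.conjStarAlgAut_apply _ _
  have hBspec : B = UB * diagonal hB.eigenvalues * star UB := by
    conv_lhs => rw [hB.spectral_theorem]
    rw [show RCLike.ofReal ∘ hB.eigenvalues = hB.eigenvalues by
      simp [RCLike.ofReal_real_eq_id]]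
    exact Unitary.conjStarAlgAut_apply _ _
  set SB : Finset (Fin n) := Finset.univ.filter fun i => 0 < hB.eigenvalues i with hSB
  set SA : Finset (Fin n) := (Finset.univ.filter fun i => 0 < hA.eigenvalues i)ᶜ with hSA
  set V : Submodule ℝ (Fin n → ℝ) := eigSpan UB SB
  set W : Submodule ℝ (Fin n → ℝ) := eigSpan UA SA
  -- the linear equivalence given by Pᵀ
  have hPT : IsUnit (Pᵀ).det := by rwa [det_transpose]
  have : Invertible Pᵀ := (Pᵀ).invertibleOfIsUnitDet hPT
  set e : (Fin n → ℝ) ≃ₗ[ℝ] (Fin n → ℝ) := (Pᵀ).toLinearEquiv' this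
  have he : ∀ x, e x = Pᵀ *ᵥ x := fun x => rfl
  set W' : Submodule ℝ (Fin n → ℝ) := W.comap (e : (Fin n → ℝ) →ₗ[ℝ] (Fin n → ℝ))
  have hW' : Module.finrank ℝ W' = Module.finrank ℝ W := by
    rw [show W' = W.map (e.symm : (Fin n → ℝ) →ₗ[ℝ] (Fin n → ℝ)) by
      rw [Submodule.map_equiv_eq_comap_symm, LinearEquiv.symm_symm]]
    exact LinearEquiv.finrank_map_eq e.symm W
  have hcardA : SA.card = n - (Finset.univ.filter fun i => 0 < hA.eigenvalues i).card := by
    rw [hSA, Finset.card_compl, Fintype.card_fin]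
  have hrV : Module.finrank ℝ V = SB.card := finrank_eigSpan UB hUB SB
  have hrW : Module.finrank ℝ W = SA.card := finrank_eigSpan UA hUA SA
  -- dimension count
  have hsum := Submodule.finrank_sup_add_finrank_inf_eq V W'
  have hle : Module.finrank ℝ ↥(V ⊔ W') ≤ n := by
    have := Submodule.finrank_le (V ⊔ W')
    simpa [Module.finrank_pi] using this
  have hposA : (Finset.univ.filter fun i => 0 < hA.eigenvalues i).card ≤ n := by
    have := Finset.card_filter_le (Finset.univ : Finset (Fin n))
      (fun i => 0 < hA.eigenvalues i)
    simpa using this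
  have hinf : 0 < Module.finrank ℝ ↥(V ⊓ W') := by omega
  have hne : (V ⊓ W') ≠ ⊥ := by
    intro h
    rw [h] at hinf
    simp at hinf
  obtain ⟨x, hxmem, hxne⟩ := Submodule.exists_mem_ne_zero_of_ne_bot hne
  obtain ⟨hxV, hxW'⟩ := Submodule.mem_inf.mp hxmem
  -- x gives a positive value of the quadratic form of B
  have hqB : 0 < x ⬝ᵥ (B *ᵥ x) := by
    rw [hBspec, quad_eq]
    set y := star UB *ᵥ x with hy
    have hyne : y ≠ 0 := nonzero_coord UB hUB hxne
    have hsupp : ∀ i ∉ SB, y i = 0 := eigSpan_coord_eq_zero UB hUB SB hxV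
    obtain ⟨j, hj⟩ : ∃ j, y j ≠ 0 := Function.ne_iff.mp hyne
    have hjS : j ∈ SB := by
      by_contra hjS
      exact hj (hsupp j hjS)
    apply Finset.sum_pos'
    · intro i _
      by_cases hi : i ∈ SB
      · have : 0 < hB.eigenvalues i := (Finset.mem_filter.mp hi).2
        positivity
      · rw [hsupp i hi]
        simp
    · refine ⟨j, Finset.mem_univ j, ?_⟩
      have h1 : 0 < hB.eigenvalues j := (Finset.mem_filter.mp hjS).2
      have h2 : 0 < (y j) ^ 2 := by positivity
      positivity
  -- but x also gives a nonpositive value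
  have hqA : x ⬝ᵥ (B *ᵥ x) ≤ 0 := by
    have hz : Pᵀ *ᵥ x ∈ W := hxW'
    have hform : x ⬝ᵥ (B *ᵥ x) = (Pᵀ *ᵥ x) ⬝ᵥ (A *ᵥ (Pᵀ *ᵥ x)) := by
      rw [← hcong]
      rw [show (P * A * Pᵀ) *ᵥ x = P *ᵥ (A *ᵥ (Pᵀ *ᵥ x)) by
        rw [← mulVec_mulVec, ← mulVec_mulVec]]
      rw [dotProduct_mulVec, show x ᵥ* P = Pᵀ *ᵥ x by rw [mulVec_transpose]]
    rw [hform, hAspec, quad_eq]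
    set z := star UA *ᵥ (Pᵀ *ᵥ x) with hzdef
    have hsupp : ∀ i ∉ SA, z i = 0 := eigSpan_coord_eq_zero UA hUA SA hz
    apply Finset.sum_nonpos
    intro i _
    by_cases hi : i ∈ SA
    · have h1 : hA.eigenvalues i ≤ 0 := by
        rw [hSA] at hi
        simp only [Finset.mem_compl, Finset.mem_filter, Finset.mem_univ, true_and,
          not_lt] at hi
        exact hi
      have h2 : 0 ≤ (z i) ^ 2 := sq_nonneg _
      exact mul_nonpos_of_nonpos_of_nonneg h1 h2
    · rw [hsupp i hi]
      simp
  exact absurd hqB (not_lt.mpr hqA)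

end SylvesterAux

open SylvesterAux

/-- **Sylvester's law of inertia.** If `A` and `B` are real symmetric `n × n` matrices and
`P A Pᵀ = B` for some invertible real matrix `P`, then `A` and `B` have the same number of
strictly positive eigenvalues, strictly negative eigenvalues and zero eigenvalues
(counted with multiplicity, as roots of the characteristic polynomial). -/
theorem sylvester_law_of_inertia (n : ℕ) (A B : Matrix (Fin n) (Fin n) ℝ)
    (hA : A.IsSymm) (hB : B.IsSymm)
    (P : Matrix (Fin n) (Fin n) ℝ) (hP : IsUnit P.det)
    (hcong : P * A * Pᵀ = B) :
    (A.charpoly.roots.filter fun x => 0 < x).card =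
      (B.charpoly.roots.filter fun x => 0 < x).card ∧
    (A.charpoly.roots.filter fun x => x < 0).card =
      (B.charpoly.roots.filter fun x => x < 0).card ∧
    Multiset.count 0 A.charpoly.roots = Multiset.count 0 B.charpoly.roots := by
  classical
  have hA' : A.IsHermitian := by
    rwa [Matrix.IsHermitian, conjTranspose_eq_transpose_of_trivial]
  have hB' : B.IsHermitian := by
    rwa [Matrix.IsHermitian, conjTranspose_eq_transpose_of_trivial]
  -- reverse congruence
  have hPdet : IsUnit P.det := hP
  have hPinv : IsUnit P⁻¹.det := (isUnit_nonsing_inv_det P hP)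
  have hcong' : P⁻¹ * B * (P⁻¹)ᵀ = A := by
    rw [← hcong, Matrix.transpose_nonsing_inv]
    rw [show P⁻¹ * (P * A * Pᵀ) * (Pᵀ)⁻¹ = (P⁻¹ * P) * A * (Pᵀ * (Pᵀ)⁻¹) by
      simp only [Matrix.mul_assoc]]
    rw [Matrix.nonsing_inv_mul P hP, Matrix.mul_nonsing_inv Pᵀ (by rwa [det_transpose]),
      one_mul, mul_one]
  -- equality of positive counts at the level of eigenvalues
  have hposLe1 := posCard_le A B P hA' hB' hP hcong
  have hposLe2 := posCard_le B A P⁻¹ hB' hA' hPinv hcong'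
  have hpos : (Finset.univ.filter fun i => 0 < hA'.eigenvalues i).card =
      (Finset.univ.filter fun i => 0 < hB'.eigenvalues i).card :=
    le_antisymm hposLe2 hposLe1
  -- ranks agree
  have hrank : A.rank = B.rank := by
    rw [← hcong, rank_mul_eq_left_of_isUnit_det Pᵀ (P * A) (by rwa [det_transpose]),
      rank_mul_eq_right_of_isUnit_det P A hP]
  -- rank = #pos + #neg for a hermitian matrix
  have hrankA : A.rank = (Finset.univ.filter fun i => 0 < hA'.eigenvalues i).card +
      (Finset.univ.filter fun i => hA'.eigenvalues i < 0).card := by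
    rw [hA'.rank_eq_card_non_zero_eigs, Fintype.card_subtype]
    rw [← Finset.card_union_of_disjoint]
    · congr 1
      ext i
      simp only [Finset.mem_filter, Finset.mem_univ, true_and, Finset.mem_union]
      constructor
      · intro h; rcases h.lt_or_gt with h' | h'
        · exact Or.inr h'
        · exact Or.inl h'
      · rintro (h | h)
        · exact ne_of_gt h
        · exact ne_of_lt h
    · rw [Finset.disjoint_filter]
      intro i _ h1 h2
      exact absurd h1 (not_lt.mpr h2.le)
  have hrankB : B.rank = (Finset.univ.filter fun i => 0 < hB'.eigenvalues i).card +
      (Finset.univ.filter fun i => hB'.eigenvalues i < 0).card := by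
    rw [hB'.rank_eq_card_non_zero_eigs, Fintype.card_subtype]
    rw [← Finset.card_union_of_disjoint]
    · congr 1
      ext i
      simp only [Finset.mem_filter, Finset.mem_univ, true_and, Finset.mem_union]
      constructor
      · intro h; rcases h.lt_or_gt with h' | h'
        · exact Or.inr h'
        · exact Or.inl h'
      · rintro (h | h)
        · exact ne_of_gt h
        · exact ne_of_lt h
    · rw [Finset.disjoint_filter]
      intro i _ h1 h2
      exact absurd h1 (not_lt.mpr h2.le)
  have hneg : (Finset.univ.filter fun i => hA'.eigenvalues i < 0).card =
      (Finset.univ.filter fun i => hB'.eigenvalues i < 0).card := by omega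
  -- roots of charpoly are the eigenvalues
  have hrootsA := roots_charpoly A hA'
  have hrootsB := roots_charpoly B hB'
  have hfilter : ∀ (M : Matrix (Fin n) (Fin n) ℝ) (hM : M.IsHermitian) (p : ℝ → Prop)
      [DecidablePred p], (M.charpoly.roots.filter p).card =
        (Finset.univ.filter fun i => p (hM.eigenvalues i)).card := by
    intro M hM p _
    rw [roots_charpoly M hM, Multiset.filter_map, Multiset.card_map]
    rfl
  refine ⟨?_, ?_, ?_⟩
  · rw [hfilter A hA' (fun x => 0 < x), hfilter B hB' (fun x => 0 < x)]
    exact hpos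
  · rw [hfilter A hA' (fun x => x < 0), hfilter B hB' (fun x => x < 0)]
    exact hneg
  · rw [Multiset.count_eq_card_filter_eq, Multiset.count_eq_card_filter_eq,
      hfilter A hA' (fun x => 0 = x), hfilter B hB' (fun x => 0 = x)]
    -- #zero = n - rank
    have hzA : (Finset.univ.filter fun i => 0 = hA'.eigenvalues i).card
        = n - A.rank := by
      rw [hA'.rank_eq_card_non_zero_eigs, Fintype.card_subtype]
      have := Finset.card_filter_add_card_filter_not
        (s := (Finset.univ : Finset (Fin n))) (p := fun i => hA'.eigenvalues i ≠ 0)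
      simp only [Finset.card_univ, Fintype.card_fin, not_not] at this
      have heq : (Finset.univ.filter fun i => 0 = hA'.eigenvalues i)
          = (Finset.univ.filter fun i => hA'.eigenvalues i = 0) := by
        apply Finset.filter_congr; intro i _; constructor <;> exact Eq.symm
      rw [heq]
      omega
    have hzB : (Finset.univ.filter fun i => 0 = hB'.eigenvalues i).card
        = n - B.rank := by
      rw [hB'.rank_eq_card_non_zero_eigs, Fintype.card_subtype]
      have := Finset.card_filter_add_card_filter_not
        (s := (Finset.univ : Finset (Fin n))) (p := fun i => hB'.eigenvalues i ≠ 0)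
      simp only [Finset.card_univ, Fintype.card_fin, not_not] at this
      have heq : (Finset.univ.filter fun i => 0 = hB'.eigenvalues i)
          = (Finset.univ.filter fun i => hB'.eigenvalues i = 0) := by
        apply Finset.filter_congr; intro i _; constructor <;> exact Eq.symm
      rw [heq]
      omega
    rw [hzA, hzB, hrank]
end

section
/- Any two triangulations of a convex polygon with n vertices are connected by a finite sequence of diagonal flips, where a flip replaces one diagonal of a triangulation by the unique other diagonal of the quadrilateral formed by the two triangles adjacent to it. -/
open Finset

/-- The cyclic successor of `a` within a subset `S` of the vertices `Fin n` of a convex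
polygon (going once around the polygon). If `S` has no other element, returns `a`. -/
def polyNext {n : ℕ} [NeZero n] (S : Finset (Fin n)) (a : Fin n) : Fin n :=
  if h : ((S.erase a).image fun b => b - a).Nonempty then
    a + ((S.erase a).image fun b => b - a).min' h
  else a

/-- The edges of the convex polygon spanned by the vertex set `S ⊆ Fin n`: pairs of
cyclically consecutive elements of `S`. -/
def polyEdges {n : ℕ} [NeZero n] (S : Finset (Fin n)) : Finset (Finset (Fin n)) :=
  S.image fun a => {a, polyNext S a}

/-- The boundary edges of the `n`-gon. -/
def boundaryEdges (n : ℕ) [NeZero n] : Finset (Finset (Fin n)) :=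
  Finset.univ.image fun i : Fin n => {i, i + 1}

/-- `x` lies strictly between `a` and `b` in the clockwise cyclic order on `Fin n`. -/
def strictBtwn {n : ℕ} [NeZero n] (a x b : Fin n) : Prop :=
  x ≠ a ∧ x ≠ b ∧ (x - a).val < (b - a).val

/-- Two chords of the `n`-gon cross (in their interiors). -/
def edgesCross {n : ℕ} [NeZero n] (e f : Finset (Fin n)) : Prop :=
  ∃ a b c d : Fin n, e = {a, b} ∧ f = {c, d} ∧ strictBtwn a c b ∧ strictBtwn b d a

/-- An `m`-angulation of the convex `n`-gon: a collection of faces (given by their vertex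
sets, each of size `m`) such that every boundary edge lies on exactly one face, every other
chord lies on either zero or two faces, and the chords used are pairwise non-crossing. -/
structure MAngulation (n m : ℕ) [NeZero n] where
  faces : Finset (Finset (Fin n))
  card_face : ∀ S ∈ faces, S.card = m
  boundary_once : ∀ i : Fin n,
    (faces.filter fun S => ({i, i + 1} : Finset (Fin n)) ∈ polyEdges S).card = 1
  internal_even : ∀ e : Finset (Fin n), e.card = 2 → e ∉ boundaryEdges n →
    (faces.filter fun S => e ∈ polyEdges S).card = 0 ∨
    (faces.filter fun S => e ∈ polyEdges S).card = 2
  noncross : ∀ e ∈ faces.biUnion polyEdges, ∀ f ∈ faces.biUnion polyEdges,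
    ¬ edgesCross e f

/-- The internal diagonals of an `m`-angulation. -/
def MAngulation.diags {n m : ℕ} [NeZero n] (M : MAngulation n m) : Finset (Finset (Fin n)) :=
  (M.faces.biUnion polyEdges) \ boundaryEdges n

/-- The dual graph of an `m`-angulation: vertices are the faces, and two faces are adjacent
when they share an internal diagonal. -/
def dualGraph {n m : ℕ} [NeZero n] (M : MAngulation n m) :
    SimpleGraph {S // S ∈ M.faces} where
  Adj S T := S ≠ T ∧ ∃ e ∈ M.diags, e ∈ polyEdges S.1 ∧ e ∈ polyEdges T.1
  symm := by
    constructor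
    rintro S T ⟨hne, e, he, h1, h2⟩
    exact ⟨hne.symm, e, he, h2, h1⟩
  loopless := by
    constructor
    rintro S ⟨hne, -⟩
    exact hne rfl

/-- The completed dual graph: one extra leaf vertex for each boundary edge of the polygon,
joined to the face containing that boundary edge. -/
def completedDual {n m : ℕ} [NeZero n] (M : MAngulation n m) :
    SimpleGraph ({S // S ∈ M.faces} ⊕ Fin n) where
  Adj v w :=
    match v, w with
    | Sum.inl S, Sum.inl T => (dualGraph M).Adj S T
    | Sum.inl S, Sum.inr i => ({i, i + 1} : Finset (Fin n)) ∈ polyEdges S.1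
    | Sum.inr i, Sum.inl S => ({i, i + 1} : Finset (Fin n)) ∈ polyEdges S.1
    | Sum.inr _, Sum.inr _ => False
  symm := by
    constructor
    rintro (S | i) (T | j) h
    · exact (dualGraph M).adj_symm h
    · exact h
    · exact h
    · exact h.elim
  loopless := by
    constructor
    rintro (S | i) h
    · exact (dualGraph M).irrefl h
    · exact h

/-- `M'` is obtained from the triangulation `M` by a diagonal flip: two triangles `S`, `T`
of `M` sharing an internal diagonal are replaced by the unique other pair of triangles
`A`, `B` triangulating the quadrilateral `S ∪ T`. -/
def IsFlip {n : ℕ} [NeZero n] (M M' : MAngulation n 3) : Prop :=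
  ∃ S T A B : Finset (Fin n), S ∈ M.faces ∧ T ∈ M.faces ∧ S ≠ T ∧
    (∃ d ∈ M.diags, d ∈ polyEdges S ∧ d ∈ polyEdges T) ∧ (S ∩ T).card = 2 ∧
    A.card = 3 ∧ B.card = 3 ∧ A ∪ B = S ∪ T ∧ (A ∩ B).card = 2 ∧
    ({A, B} : Finset (Finset (Fin n))) ≠ {S, T} ∧
    M'.faces = (M.faces \ {S, T}) ∪ {A, B}


/-! ### Auxiliary development -/

section Aux
variable {n : ℕ} [NeZero n]

omit [NeZero n] in
theorem fin_sub_val (a b : Fin n) :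
    (a - b).val = if b.val ≤ a.val then a.val - b.val else a.val + n - b.val := by
  have ha := a.isLt; have hb := b.isLt
  rw [Fin.sub_def]
  simp only [Fin.val_mk]
  split_ifs with h
  · have : n - b.val + a.val = n + (a.val - b.val) := by omega
    rw [this, Nat.add_mod_left, Nat.mod_eq_of_lt (by omega)]
  · rw [Nat.mod_eq_of_lt (by omega)]; omega

theorem strictBtwn_val_iff (a x b : Fin n) :
    strictBtwn a x b ↔ (x.val ≠ a.val ∧ x.val ≠ b.val ∧
      ((a.val < x.val ∧ x.val < b.val) ∨
        (b.val < a.val ∧ (a.val < x.val ∨ x.val < b.val)))) := by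
  have ha := a.isLt; have hb := b.isLt; have hx := x.isLt
  unfold strictBtwn
  rw [Fin.ne_iff_vne, Fin.ne_iff_vne, fin_sub_val, fin_sub_val]
  split_ifs <;> omega

theorem pair_eq_pair_iff {α : Type*} [DecidableEq α] {a b c d : α} :
    ({a, b} : Finset α) = {c, d} ↔ (a = c ∧ b = d) ∨ (a = d ∧ b = c) := by
  rw [← Finset.coe_inj]; push_cast; exact Set.pair_eq_pair_iff

theorem cross_pair_iff {u v p q : Fin n} (huv : u ≠ v) (hpq : p ≠ q) :
    edgesCross {u, v} {p, q} ↔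
      (strictBtwn u p v ∧ strictBtwn v q u) ∨ (strictBtwn u q v ∧ strictBtwn v p u) := by
  constructor
  · rintro ⟨a, b, c, d, he, hf, h1, h2⟩
    rw [eq_comm, pair_eq_pair_iff] at he hf
    rcases he with ⟨rfl, rfl⟩ | ⟨rfl, rfl⟩ <;> rcases hf with ⟨rfl, rfl⟩ | ⟨rfl, rfl⟩ <;> tauto
  · rintro (⟨h1, h2⟩ | ⟨h1, h2⟩)
    · exact ⟨u, v, p, q, rfl, rfl, h1, h2⟩
    · exact ⟨u, v, q, p, rfl, pair_comm p q, h1, h2⟩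

theorem edgesCross.disjoint {e f : Finset (Fin n)} (h : edgesCross e f) : Disjoint e f := by
  obtain ⟨a, b, c, d, rfl, rfl, h1, h2⟩ := h
  have := h1.1; have := h1.2.1; have := h2.1; have := h2.2.1
  simp only [Finset.disjoint_insert_left, Finset.disjoint_insert_right,
    Finset.disjoint_singleton, Finset.mem_insert, Finset.mem_singleton,
    Finset.disjoint_singleton_left, Finset.disjoint_singleton_right]
  constructor <;> rintro (rfl | rfl) <;> simp_all

theorem edgesCross.symm {e f : Finset (Fin n)} (h : edgesCross e f) : edgesCross f e := by
  obtain ⟨a, b, c, d, rfl, rfl, h1, h2⟩ := h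
  have hab : a ≠ b := by
    rintro rfl
    rw [strictBtwn_val_iff] at h1
    omega
  have hcd : c ≠ d := by
    rintro rfl
    rw [strictBtwn_val_iff] at h1 h2
    omega
  rw [cross_pair_iff hcd hab]
  rw [strictBtwn_val_iff] at h1 h2
  refine Or.inr ⟨?_, ?_⟩ <;> rw [strictBtwn_val_iff] <;> omega


theorem polyNext_spec {S : Finset (Fin n)} {a : Fin n} (h : (S.erase a).Nonempty) :
    ∃ b ∈ S.erase a, polyNext S a = b ∧
      ∀ b' ∈ S.erase a, (b - a).val ≤ (b' - a).val := by
  have himg : ((S.erase a).image fun b => b - a).Nonempty := h.image _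
  obtain ⟨b, hb, hmin⟩ := Finset.mem_image.mp (Finset.min'_mem _ himg)
  refine ⟨b, hb, ?_, ?_⟩
  · rw [polyNext, dif_pos himg, ← hmin, add_sub_cancel]
  · intro b' hb'
    have h2 : b' - a ∈ (S.erase a).image fun b => b - a :=
      Finset.mem_image_of_mem (fun b => b - a) hb'
    have := Finset.min'_le _ _ h2
    rw [← hmin] at this
    exact this

omit [NeZero n] in
theorem cyc3 {x y z : Fin n} (hxy : x ≠ y) (hxz : x ≠ z) (hyz : y ≠ z)
    (h1 : (z - x).val ≤ (y - x).val) (h2 : (z - y).val ≤ (x - y).val) : False := by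
  have hx := x.isLt; have hy := y.isLt; have hz := z.isLt
  rw [Fin.ne_iff_vne] at hxy hxz hyz
  rw [fin_sub_val, fin_sub_val] at h1 h2
  have e1 : (z - x).val = 0 → z = x := by
    intro h; rw [fin_sub_val] at h
    apply Fin.ext; split_ifs at h <;> omega
  split_ifs at h1 h2 <;> omega

theorem triple_repr {S : Finset (Fin n)} {u v : Fin n} (hS : S.card = 3)
    (hu : u ∈ S) (hv : v ∈ S) (huv : u ≠ v) :
    ∃ w, S = {u, v, w} ∧ w ≠ u ∧ w ≠ v := by
  have hsub : ({u, v} : Finset (Fin n)) ⊆ S := by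
    intro t ht; simp only [Finset.mem_insert, Finset.mem_singleton] at ht
    rcases ht with rfl | rfl <;> assumption
  have hcard2 : ({u, v} : Finset (Fin n)).card = 2 := Finset.card_pair huv
  have h1 : (S \ {u, v}).card = 1 := by
    rw [Finset.card_sdiff_of_subset hsub, hS, hcard2]
  obtain ⟨w, hw⟩ := Finset.card_eq_one.mp h1
  have hwmem : w ∈ S \ {u, v} := by rw [hw]; exact Finset.mem_singleton_self w
  rw [Finset.mem_sdiff, Finset.mem_insert, Finset.mem_singleton] at hwmem
  refine ⟨w, ?_, fun h => hwmem.2 (Or.inl h), fun h => hwmem.2 (Or.inr h)⟩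
  have : S = {u, v} ∪ (S \ {u, v}) := by
    rw [Finset.union_sdiff_of_subset hsub]
  rw [this, hw]
  ext t
  simp only [Finset.mem_union, Finset.mem_insert, Finset.mem_singleton]
  tauto

omit [NeZero n] in
theorem erase_triple {u v w : Fin n} (huv : u ≠ v) (huw : u ≠ w) :
    ({u, v, w} : Finset (Fin n)).erase u = {v, w} := by
  ext t
  simp only [Finset.mem_erase, Finset.mem_insert, Finset.mem_singleton]
  constructor
  · rintro ⟨ht, rfl | rfl | rfl⟩ <;> tauto
  · rintro (rfl | rfl) <;> tauto

theorem mem_polyEdges_iff {S : Finset (Fin n)} (hS : S.card = 3) {e : Finset (Fin n)} :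
    e ∈ polyEdges S ↔ e ⊆ S ∧ e.card = 2 := by
  constructor
  · rintro he
    obtain ⟨a, ha, rfl⟩ := Finset.mem_image.mp he
    have hne : (S.erase a).Nonempty := by
      rw [← Finset.card_pos, Finset.card_erase_of_mem ha, hS]; omega
    obtain ⟨b, hb, heq, -⟩ := polyNext_spec hne
    rw [Finset.mem_erase] at hb
    rw [heq]
    constructor
    · intro t ht
      simp only [Finset.mem_insert, Finset.mem_singleton] at ht
      rcases ht with rfl | rfl
      · exact ha
      · exact hb.2
    · exact Finset.card_pair (Ne.symm hb.1)
  · rintro ⟨hsub, hcard⟩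
    obtain ⟨u, v, huv, rfl⟩ := Finset.card_eq_two.mp hcard
    have hu : u ∈ S := hsub (by simp)
    have hv : v ∈ S := hsub (by simp)
    obtain ⟨w, rfl, hwu, hwv⟩ := triple_repr hS hu hv huv
    -- compute polyNext at u
    have hneu : (({u, v, w} : Finset (Fin n)).erase u).Nonempty := by
      rw [erase_triple huv (Ne.symm hwu)]; exact ⟨v, by simp⟩
    obtain ⟨b, hb, heq, hmin⟩ := polyNext_spec hneu
    rw [erase_triple huv (Ne.symm hwu), Finset.mem_insert, Finset.mem_singleton] at hb
    rcases hb with rfl | rfl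
    · -- polyNext u = v : edge {u, v}
      exact Finset.mem_image.mpr ⟨u, hu, by rw [heq]⟩
    · -- polyNext u = b (the third vertex); then polyNext v = u, giving edge {v, u}
      have hmv : (b - u).val ≤ (v - u).val := hmin v (by
        rw [erase_triple huv (Ne.symm hwu)]; simp)
      have hcomm : ({u, v, b} : Finset (Fin n)) = {v, u, b} := by
        ext t
        simp only [Finset.mem_insert, Finset.mem_singleton]
        tauto
      have hnev : (({u, v, b} : Finset (Fin n)).erase v).Nonempty := by
        rw [hcomm, erase_triple (Ne.symm huv) (Ne.symm hwv)]
        exact ⟨u, by simp⟩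
      obtain ⟨b', hb', heq', hmin'⟩ := polyNext_spec hnev
      rw [hcomm, erase_triple (Ne.symm huv) (Ne.symm hwv),
        Finset.mem_insert, Finset.mem_singleton] at hb'
      rcases hb' with rfl | rfl
      · refine Finset.mem_image.mpr ⟨v, hv, ?_⟩
        rw [heq', Finset.pair_comm]
      · exfalso
        have hmu : (b' - v).val ≤ (u - v).val := hmin' u (by
          rw [hcomm, erase_triple (Ne.symm huv) (Ne.symm hwv)]; simp)
        exact cyc3 huv (Ne.symm hwu) (Ne.symm hwv) hmv hmu


theorem add_one_val (hn : 3 ≤ n) (x : Fin n) :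
    (x + 1).val = if x.val + 1 = n then 0 else x.val + 1 := by
  have hx := x.isLt
  have h1 : (1 : Fin n).val = 1 := by
    rw [Fin.val_one']; exact Nat.mod_eq_of_lt (by omega)
  rw [Fin.add_def, h1]
  simp only [Fin.val_mk]
  split_ifs with h
  · rw [h, Nat.mod_self]
  · exact Nat.mod_eq_of_lt (by omega)

theorem mem_boundary_iff {x y : Fin n} :
    ({x, y} : Finset (Fin n)) ∈ boundaryEdges n ↔ y = x + 1 ∨ x = y + 1 := by
  unfold boundaryEdges
  rw [Finset.mem_image]
  constructor
  · rintro ⟨i, -, hi⟩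
    rw [pair_eq_pair_iff] at hi
    rcases hi with ⟨rfl, rfl⟩ | ⟨rfl, rfl⟩
    · left; rfl
    · right; rfl
  · rintro (rfl | rfl)
    · exact ⟨x, Finset.mem_univ x, rfl⟩
    · exact ⟨y, Finset.mem_univ y, (Finset.pair_comm _ _)⟩

theorem boundary_not_cross (hn : 3 ≤ n) {e f : Finset (Fin n)}
    (he : e ∈ boundaryEdges n) : ¬ edgesCross e f := by
  obtain ⟨i, -, rfl⟩ := Finset.mem_image.mp he
  rintro ⟨a, b, c, d, hab, -, h1, h2⟩
  have hiv := add_one_val hn i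
  have hi := i.isLt
  rw [eq_comm, pair_eq_pair_iff] at hab
  rw [strictBtwn_val_iff] at h1 h2
  rcases hab with ⟨rfl, rfl⟩ | ⟨rfl, rfl⟩ <;> split_ifs at hiv <;> omega

theorem pair_subset_iff {x y : Fin n} {S : Finset (Fin n)} :
    ({x, y} : Finset (Fin n)) ⊆ S ↔ x ∈ S ∧ y ∈ S := by
  rw [Finset.insert_subset_iff, Finset.singleton_subset_iff]

theorem pair_subset_triple {e : Finset (Fin n)} {x y z : Fin n}
    (hsub : e ⊆ ({x, y, z} : Finset (Fin n))) (hcard : e.card = 2) :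
    e = {x, y} ∨ e = {x, z} ∨ e = {y, z} := by
  obtain ⟨u, v, huv, rfl⟩ := Finset.card_eq_two.mp hcard
  have hu := hsub (Finset.mem_insert_self u {v})
  have hv := hsub (Finset.mem_insert_of_mem (Finset.mem_singleton_self v))
  simp only [Finset.mem_insert, Finset.mem_singleton] at hu hv
  have hc : ∀ p q : Fin n, ({p, q} : Finset (Fin n)) = {q, p} := fun p q => Finset.pair_comm p q
  rcases hu with rfl | rfl | rfl <;> rcases hv with rfl | rfl | rfl <;>
    simp_all <;> tauto

end Aux

section MLemmas
variable {n : ℕ} [NeZero n] (M : MAngulation n 3)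

theorem MAngulation.edge_mem {S e : Finset (Fin n)} (hS : S ∈ M.faces)
    (he : e ∈ polyEdges S) : e ∈ M.faces.biUnion polyEdges :=
  Finset.mem_biUnion.mpr ⟨S, hS, he⟩

theorem MAngulation.edge_spec {e : Finset (Fin n)} (he : e ∈ M.faces.biUnion polyEdges) :
    e.card = 2 ∧ ∃ S ∈ M.faces, e ⊆ S := by
  obtain ⟨S, hS, heS⟩ := Finset.mem_biUnion.mp he
  have h3 := M.card_face S hS
  rw [mem_polyEdges_iff h3] at heS
  exact ⟨heS.2, S, hS, heS.1⟩

theorem MAngulation.two_faces {e : Finset (Fin n)}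
    (he : e ∈ M.faces.biUnion polyEdges) (hb : e ∉ boundaryEdges n) :
    ∃ F₁ F₂ : Finset (Fin n), F₁ ∈ M.faces ∧ F₂ ∈ M.faces ∧ F₁ ≠ F₂ ∧
      (M.faces.filter fun S => e ∈ polyEdges S) = {F₁, F₂} := by
  obtain ⟨S, hS, heS⟩ := Finset.mem_biUnion.mp he
  have hcard := (M.edge_spec he).1
  rcases M.internal_even e hcard hb with h0 | h2
  · exfalso
    have : S ∈ M.faces.filter fun S => e ∈ polyEdges S := Finset.mem_filter.mpr ⟨hS, heS⟩
    rw [Finset.card_eq_zero.mp h0] at this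
    exact absurd this (Finset.notMem_empty S)
  · obtain ⟨F₁, F₂, hne, hf⟩ := Finset.card_eq_two.mp h2
    have h1 : F₁ ∈ M.faces.filter fun S => e ∈ polyEdges S := by rw [hf]; simp
    have h2' : F₂ ∈ M.faces.filter fun S => e ∈ polyEdges S := by rw [hf]; simp
    exact ⟨F₁, F₂, (Finset.mem_filter.mp h1).1, (Finset.mem_filter.mp h2').1, hne, hf⟩

theorem MAngulation.diag_spec {d : Finset (Fin n)} (hd : d ∈ M.diags) :
    d ∈ M.faces.biUnion polyEdges ∧ d ∉ boundaryEdges n :=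
  Finset.mem_sdiff.mp hd

end MLemmas

section Fan
variable {n : ℕ} [NeZero n]

theorem fin_succ_ne_self (hn : 3 ≤ n) (i : Fin n) : i + 1 ≠ i := by
  intro h
  have h2 := congrArg Fin.val h
  rw [add_one_val hn] at h2
  have h3 := i.isLt
  split_ifs at h2 <;> omega

theorem face_on_boundary_eq (hn : 3 ≤ n) (M : MAngulation n 3)
    (h0 : ∀ d ∈ M.diags, (0 : Fin n) ∈ d) {S : Finset (Fin n)} (hS : S ∈ M.faces)
    {i : Fin n} (hi : i ≠ 0) (hi1 : i + 1 ≠ 0)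
    (hmem : ({i, i + 1} : Finset (Fin n)) ∈ polyEdges S) : S = {i, i + 1, 0} := by
  have h3 := M.card_face S hS
  rw [mem_polyEdges_iff h3] at hmem
  have hii1 : i ≠ i + 1 := (fin_succ_ne_self hn i).symm
  obtain ⟨w, hrepr, hwi, hwi1⟩ := triple_repr h3 (hmem.1 (by simp)) (hmem.1 (by simp)) hii1
  suffices hw : w = 0 by
    rw [hrepr, hw]
  by_contra hw0
  -- the edge {w, i}
  have hedge : ∀ x : Fin n, x ∈ S → x ≠ w → ({w, x} : Finset (Fin n)) ∈ M.faces.biUnion polyEdges := by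
    intro x hx hxw
    refine M.edge_mem hS ((mem_polyEdges_iff h3).mpr ⟨?_, Finset.card_pair hxw.symm⟩)
    rw [pair_subset_iff]
    exact ⟨by rw [hrepr]; simp, hx⟩
  have hiS : i ∈ S := hmem.1 (by simp)
  have hi1S : i + 1 ∈ S := hmem.1 (by simp)
  have key : ∀ x : Fin n, x ∈ S → x ≠ w → x ≠ 0 →
      ({w, x} : Finset (Fin n)) ∈ boundaryEdges n := by
    intro x hx hxw hx0
    by_contra hb
    have hdiag : ({w, x} : Finset (Fin n)) ∈ M.diags :=
      Finset.mem_sdiff.mpr ⟨hedge x hx hxw, hb⟩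
    have := h0 _ hdiag
    simp only [Finset.mem_insert, Finset.mem_singleton] at this
    rcases this with h | h
    · exact hw0 h.symm
    · exact hx0 h.symm
  have e1 : i = w + 1 := by
    rcases mem_boundary_iff.mp (key i hiS (Ne.symm hwi) hi) with h | h
    · exact h
    · exact absurd h hwi1
  have e2 : w = (i + 1) + 1 := by
    rcases mem_boundary_iff.mp (key (i + 1) hi1S (Ne.symm hwi1) hi1) with h | h
    · exact absurd (add_right_cancel h).symm hwi
    · exact h
  -- derive a contradiction by arithmetic
  have v1 := congrArg Fin.val e1
  have v2 := congrArg Fin.val e2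
  have vJ := add_one_val hn i
  rw [add_one_val hn] at v1 v2
  have hi' : i.val ≠ 0 := fun h => hi (Fin.ext h)
  have hi1' : (i + 1).val ≠ 0 := fun h => hi1 (Fin.ext h)
  have hw' : w.val ≠ 0 := fun h => hw0 (Fin.ext h)
  have := i.isLt; have := w.isLt; have := (i + 1).isLt
  split_ifs at v1 v2 vJ <;> omega

theorem face_form (hn : 3 ≤ n) (M : MAngulation n 3)
    (h0 : ∀ d ∈ M.diags, (0 : Fin n) ∈ d) {S : Finset (Fin n)} (hS : S ∈ M.faces) :
    ∃ i : Fin n, i ≠ 0 ∧ i + 1 ≠ 0 ∧ S = {i, i + 1, 0} ∧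
      ({i, i + 1} : Finset (Fin n)) ∈ polyEdges S := by
  have h3 := M.card_face S hS
  have herase : 1 < (S.erase 0).card := by
    have := Finset.card_erase_le (a := (0 : Fin n)) (s := S)
    have h1 := Finset.pred_card_le_card_erase (a := (0 : Fin n)) (s := S)
    omega
  obtain ⟨p, hp, q, hq, hpq⟩ := Finset.one_lt_card.mp herase
  rw [Finset.mem_erase] at hp hq
  have hedge : ({p, q} : Finset (Fin n)) ∈ polyEdges S :=
    (mem_polyEdges_iff h3).mpr ⟨pair_subset_iff.mpr ⟨hp.2, hq.2⟩, Finset.card_pair hpq⟩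
  have hbd : ({p, q} : Finset (Fin n)) ∈ boundaryEdges n := by
    by_contra hb
    have hdiag : ({p, q} : Finset (Fin n)) ∈ M.diags :=
      Finset.mem_sdiff.mpr ⟨M.edge_mem hS hedge, hb⟩
    have := h0 _ hdiag
    simp only [Finset.mem_insert, Finset.mem_singleton] at this
    rcases this with h | h
    · exact hp.1 h.symm
    · exact hq.1 h.symm
  rcases mem_boundary_iff.mp hbd with h | h
  · refine ⟨p, hp.1, by rw [← h]; exact hq.1, ?_, by rw [← h]; exact hedge⟩
    exact face_on_boundary_eq hn M h0 hS hp.1 (by rw [← h]; exact hq.1)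
      (by rw [← h]; exact hedge)
  · refine ⟨q, hq.1, by rw [← h]; exact hp.1, ?_, ?_⟩
    · exact face_on_boundary_eq hn M h0 hS hq.1 (by rw [← h]; exact hp.1)
        (by rw [← h, Finset.pair_comm]; exact hedge)
    · rw [← h, Finset.pair_comm]; exact hedge

theorem fan_subset (hn : 3 ≤ n) (M M' : MAngulation n 3)
    (h0 : ∀ d ∈ M.diags, (0 : Fin n) ∈ d) (h0' : ∀ d ∈ M'.diags, (0 : Fin n) ∈ d) :
    M.faces ⊆ M'.faces := by
  intro S hS
  obtain ⟨i, hi, hi1, hform, -⟩ := face_form hn M h0 hS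
  have h1 := M'.boundary_once i
  have hne : (M'.faces.filter fun S => ({i, i + 1} : Finset (Fin n)) ∈ polyEdges S).Nonempty := by
    rw [← Finset.card_pos, h1]; omega
  obtain ⟨T, hT⟩ := hne
  rw [Finset.mem_filter] at hT
  have := face_on_boundary_eq hn M' h0' hT.1 hi hi1 hT.2
  rw [hform, ← this]
  exact hT.1

theorem fan_unique (hn : 3 ≤ n) (M M' : MAngulation n 3)
    (h0 : ∀ d ∈ M.diags, (0 : Fin n) ∈ d) (h0' : ∀ d ∈ M'.diags, (0 : Fin n) ∈ d) :
    M = M' := by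
  have hfaces : M.faces = M'.faces :=
    Finset.Subset.antisymm (fan_subset hn M M' h0 h0') (fan_subset hn M' M h0' h0)
  cases M; cases M'
  simp only at hfaces
  subst hfaces
  rfl

end Fan

section FlipPrep
variable {n : ℕ} [NeZero n]

/-- Key geometric fact: a chord non-crossing with all sides and diagonal of the
quadrilateral `0, a, c, b` does not cross the new diagonal `{0, c}`. -/
theorem noncross_new {a b c x y : Fin n} (h0a : 0 < a.val) (hac : a.val < c.val)
    (hcb : c.val < b.val) (hxy : x ≠ y)
    (h1 : ¬ edgesCross {x, y} {0, a}) (h2 : ¬ edgesCross {x, y} {0, b})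
    (h3 : ¬ edgesCross {x, y} {a, c}) (h4 : ¬ edgesCross {x, y} {c, b})
    (h5 : ¬ edgesCross {x, y} {a, b}) (hne : ({x, y} : Finset (Fin n)) ≠ {a, b}) :
    ¬ edgesCross {x, y} {0, c} := by
  have hb := b.isLt
  have hz : ((0 : Fin n)).val = 0 := Fin.val_zero n
  have n0a : (0 : Fin n) ≠ a := Fin.ne_of_val_ne (by simp only [hz]; omega)
  have n0b : (0 : Fin n) ≠ b := Fin.ne_of_val_ne (by simp only [hz]; omega)
  have n0c : (0 : Fin n) ≠ c := Fin.ne_of_val_ne (by simp only [hz]; omega)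
  have nac : a ≠ c := Fin.ne_of_val_ne (by omega)
  have ncb : c ≠ b := Fin.ne_of_val_ne (by omega)
  have nab : a ≠ b := Fin.ne_of_val_ne (by omega)
  intro hcross
  rw [cross_pair_iff hxy n0c] at hcross
  have core : ∀ u v : Fin n, u ≠ v → ({u, v} : Finset (Fin n)) = {x, y} →
      strictBtwn u 0 v → strictBtwn v c u → False := by
    intro u v huv hpair hu0 hvc
    have hU := u.isLt; have hV := v.isLt
    rw [strictBtwn_val_iff] at hu0 hvc
    rw [hz] at hu0
    rw [← hpair] at h1 h2 h3 h4 h5 hne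
    rcases lt_trichotomy v.val a.val with hv | hv | hv
    · rcases le_or_gt b.val u.val with hu | hu
      · -- u ∈ [b, 0): e crosses {0, a}
        exact h1 ((cross_pair_iff huv n0a).mpr (Or.inl (by
          constructor <;> (simp only [strictBtwn_val_iff, hz]; omega))))
      · -- u ∈ (c, b): e crosses {a, b}
        exact h5 ((cross_pair_iff huv nab).mpr (Or.inr (by
          constructor <;> (simp only [strictBtwn_val_iff, hz]; omega))))
    · have hva : v = a := Fin.ext hv
      rcases lt_trichotomy u.val b.val with hu | hu | hu
      · -- u ∈ (c, b): e crosses {c, b}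
        exact h4 ((cross_pair_iff huv ncb).mpr (Or.inr (by
          constructor <;> (simp only [strictBtwn_val_iff, hz]; omega))))
      · exact hne (by rw [hva, Fin.ext hu, Finset.pair_comm])
      · -- u ∈ (b, 0): e crosses {0, b}
        exact h2 ((cross_pair_iff huv n0b).mpr (Or.inl (by
          constructor <;> (simp only [strictBtwn_val_iff, hz]; omega))))
    · -- v ∈ (a, c): e crosses {a, c}
      exact h3 ((cross_pair_iff huv nac).mpr (Or.inl (by
        constructor <;> (simp only [strictBtwn_val_iff, hz]; omega))))
  rcases hcross with ⟨hc1, hc2⟩ | ⟨hc1, hc2⟩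
  · exact core x y hxy rfl hc1 hc2
  · exact core y x hxy.symm (Finset.pair_comm y x) hc2 hc1

theorem cross_0c_ab {a b c : Fin n} (h0a : 0 < a.val) (hac : a.val < c.val)
    (hcb : c.val < b.val) : edgesCross {0, c} {a, b} := by
  have hb := b.isLt
  have hz : ((0 : Fin n)).val = 0 := Fin.val_zero n
  have n0c : (0 : Fin n) ≠ c := Fin.ne_of_val_ne (by simp only [hz]; omega)
  have nab : a ≠ b := Fin.ne_of_val_ne (by omega)
  rw [cross_pair_iff n0c nab]
  left
  constructor <;> (rw [strictBtwn_val_iff]; simp only [hz, Fin.val_zero]; omega)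

theorem count_pair {α : Type*} [DecidableEq α] (X Y : α) (hXY : X ≠ Y)
    (p : α → Prop) [DecidablePred p] :
    (({X, Y} : Finset α).filter p).card =
      (if p X then 1 else 0) + (if p Y then 1 else 0) := by
  rw [Finset.filter_insert, Finset.filter_singleton]
  split_ifs <;> simp_all [Finset.card_insert_of_notMem]

theorem count_split (faces : Finset (Finset (Fin n))) (Fz Fc A B : Finset (Fin n))
    (hFz : Fz ∈ faces) (hFc : Fc ∈ faces) (hA : A ∉ faces) (hB : B ∉ faces)
    (p : Finset (Fin n) → Prop) [DecidablePred p] :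
    (((faces \ {Fz, Fc}) ∪ {A, B}).filter p).card + (({Fz, Fc} : Finset _).filter p).card
      = (faces.filter p).card + (({A, B} : Finset _).filter p).card := by
  have hsub : ({Fz, Fc} : Finset (Finset (Fin n))) ⊆ faces := by
    intro t ht
    rcases Finset.mem_insert.mp ht with rfl | ht
    · exact hFz
    · rw [Finset.mem_singleton] at ht; subst ht; exact hFc
  have hdisj : Disjoint (faces \ {Fz, Fc}) ({A, B} : Finset (Finset (Fin n))) := by
    rw [Finset.disjoint_right]
    intro t ht ht'
    rcases Finset.mem_insert.mp ht with rfl | ht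
    · exact hA (Finset.mem_sdiff.mp ht').1
    · rw [Finset.mem_singleton] at ht; subst ht; exact hB (Finset.mem_sdiff.mp ht').1
  rw [Finset.filter_union, Finset.card_union_of_disjoint
    (Finset.disjoint_filter_filter hdisj)]
  have hfs : (faces \ {Fz, Fc}).filter p = faces.filter p \ ({Fz, Fc} : Finset _).filter p := by
    ext t
    simp only [Finset.mem_filter, Finset.mem_sdiff]
    tauto
  rw [hfs, Finset.card_sdiff_of_subset (Finset.filter_subset_filter p hsub)]
  have := Finset.card_le_card (Finset.filter_subset_filter p hsub)
  omega

end FlipPrep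

section Quad
variable {n : ℕ} [NeZero n] {a b c : Fin n}

theorem quad_ne (h0a : 0 < a.val) (hac : a.val < c.val) (hcb : c.val < b.val) :
    a ≠ 0 ∧ b ≠ 0 ∧ c ≠ 0 ∧ a ≠ b ∧ a ≠ c ∧ c ≠ b := by
  have hz : ((0 : Fin n)).val = 0 := Fin.val_zero n
  refine ⟨Fin.ne_of_val_ne ?_, Fin.ne_of_val_ne ?_, Fin.ne_of_val_ne ?_,
    Fin.ne_of_val_ne ?_, Fin.ne_of_val_ne ?_, Fin.ne_of_val_ne ?_⟩ <;>
    (try simp only [hz]) <;> omega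

theorem quad_card (h0a : 0 < a.val) (hac : a.val < c.val) (hcb : c.val < b.val) :
    ({a, b, 0} : Finset (Fin n)).card = 3 ∧ ({a, b, c} : Finset (Fin n)).card = 3 ∧
    ({a, c, 0} : Finset (Fin n)).card = 3 ∧ ({c, b, 0} : Finset (Fin n)).card = 3 := by
  obtain ⟨na0, nb0, nc0, nab, nac, ncb⟩ := quad_ne h0a hac hcb
  refine ⟨?_, ?_, ?_, ?_⟩ <;> rw [Finset.card_eq_three]
  · exact ⟨a, b, 0, nab, na0, nb0, rfl⟩
  · exact ⟨a, b, c, nab, nac, ncb.symm, rfl⟩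
  · exact ⟨a, c, 0, nac, na0, nc0, rfl⟩
  · exact ⟨c, b, 0, ncb, nc0, nb0, rfl⟩

theorem pair_ne_pair {p q r s : Fin n} (h1 : p = r → q = s → False)
    (h2 : p = s → q = r → False) : ({p, q} : Finset (Fin n)) ≠ {r, s} := by
  intro h
  rcases pair_eq_pair_iff.mp h with ⟨ha, hb⟩ | ⟨ha, hb⟩
  · exact h1 ha hb
  · exact h2 ha hb

theorem mem_polyEdges_pair {S : Finset (Fin n)} (h3 : S.card = 3) {x y : Fin n}
    (hx : x ∈ S) (hy : y ∈ S) (hxy : x ≠ y) : ({x, y} : Finset (Fin n)) ∈ polyEdges S :=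
  (mem_polyEdges_iff h3).mpr ⟨pair_subset_iff.mpr ⟨hx, hy⟩, Finset.card_pair hxy⟩

theorem count_balance' (h0a : 0 < a.val) (hac : a.val < c.val) (hcb : c.val < b.val)
    {e : Finset (Fin n)} (he2 : e.card = 2)
    (hea : e ≠ {a, b}) (hec : e ≠ ({c, 0} : Finset (Fin n))) :
    ((({({a, b, 0} : Finset (Fin n)), ({a, b, c} : Finset (Fin n))} :
        Finset (Finset (Fin n)))).filter fun S => e ∈ polyEdges S).card =
    ((({({a, c, 0} : Finset (Fin n)), ({c, b, 0} : Finset (Fin n))} :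
        Finset (Finset (Fin n)))).filter fun S => e ∈ polyEdges S).card := by
  obtain ⟨na0, nb0, nc0, nab, nac, ncb⟩ := quad_ne h0a hac hcb
  obtain ⟨cFz, cFc, cA, cB⟩ := quad_card h0a hac hcb
  have hFzFc : ({a, b, 0} : Finset (Fin n)) ≠ {a, b, c} := by
    intro h
    have h0 : (0 : Fin n) ∈ ({a, b, c} : Finset (Fin n)) := h ▸ (by simp)
    simp only [Finset.mem_insert, Finset.mem_singleton] at h0
    rcases h0 with h0 | h0 | h0 <;> simp_all
  have hAB : ({a, c, 0} : Finset (Fin n)) ≠ {c, b, 0} := by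
    intro h
    have h0 : a ∈ ({c, b, 0} : Finset (Fin n)) := h ▸ (by simp)
    simp only [Finset.mem_insert, Finset.mem_singleton] at h0
    rcases h0 with h0 | h0 | h0 <;> simp_all
  rw [count_pair _ _ hFzFc, count_pair _ _ hAB]
  have h1 : (e ∈ polyEdges ({a, b, 0} : Finset (Fin n))) ↔ (e = {a, 0} ∨ e = {b, 0}) := by
    rw [mem_polyEdges_iff cFz]
    constructor
    · rintro ⟨hsub, -⟩
      rcases pair_subset_triple hsub he2 with h | h | h
      · exact absurd h hea
      · exact Or.inl h
      · exact Or.inr h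
    · rintro (rfl | rfl) <;>
        exact ⟨pair_subset_iff.mpr ⟨by simp, by simp⟩, he2⟩
  have h2 : (e ∈ polyEdges ({a, b, c} : Finset (Fin n))) ↔ (e = {a, c} ∨ e = {b, c}) := by
    rw [mem_polyEdges_iff cFc]
    constructor
    · rintro ⟨hsub, -⟩
      rcases pair_subset_triple hsub he2 with h | h | h
      · exact absurd h hea
      · exact Or.inl h
      · exact Or.inr h
    · rintro (rfl | rfl) <;>
        exact ⟨pair_subset_iff.mpr ⟨by simp, by simp⟩, he2⟩
  have h3 : (e ∈ polyEdges ({a, c, 0} : Finset (Fin n))) ↔ (e = {a, c} ∨ e = {a, 0}) := by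
    rw [mem_polyEdges_iff cA]
    constructor
    · rintro ⟨hsub, -⟩
      rcases pair_subset_triple hsub he2 with h | h | h
      · exact Or.inl h
      · exact Or.inr h
      · exact absurd h hec
    · rintro (rfl | rfl) <;>
        exact ⟨pair_subset_iff.mpr ⟨by simp, by simp⟩, he2⟩
  have h4 : (e ∈ polyEdges ({c, b, 0} : Finset (Fin n))) ↔ (e = {b, c} ∨ e = {b, 0}) := by
    rw [mem_polyEdges_iff cB]
    constructor
    · rintro ⟨hsub, -⟩
      rcases pair_subset_triple hsub he2 with h | h | h
      · exact Or.inl (h.trans (Finset.pair_comm c b))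
      · exact absurd h hec
      · exact Or.inr h
    · rintro (rfl | rfl)
      · exact ⟨pair_subset_iff.mpr ⟨by simp, by simp⟩, he2⟩
      · exact ⟨pair_subset_iff.mpr ⟨by simp, by simp⟩, he2⟩
  have p12 : ({a, 0} : Finset (Fin n)) ≠ {b, 0} :=
    pair_ne_pair (fun h _ => nab h) (fun h _ => na0 h)
  have p13 : ({a, 0} : Finset (Fin n)) ≠ {a, c} :=
    pair_ne_pair (fun _ h => nc0 h.symm) (fun h _ => nac h)
  have p14 : ({a, 0} : Finset (Fin n)) ≠ {b, c} :=
    pair_ne_pair (fun h _ => nab h) (fun h _ => nac h)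
  have p23 : ({b, 0} : Finset (Fin n)) ≠ {a, c} :=
    pair_ne_pair (fun h _ => nab h.symm) (fun h _ => ncb h.symm)
  have p24 : ({b, 0} : Finset (Fin n)) ≠ {b, c} :=
    pair_ne_pair (fun _ h => nc0 h.symm) (fun h _ => ncb h.symm)
  have p34 : ({a, c} : Finset (Fin n)) ≠ {b, c} :=
    pair_ne_pair (fun h _ => nab h) (fun _ h => ncb h)
  simp only [h1, h2, h3, h4]
  by_cases e1 : e = ({a, 0} : Finset (Fin n)) <;>
    by_cases e2 : e = ({b, 0} : Finset (Fin n)) <;>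
    by_cases e3 : e = ({a, c} : Finset (Fin n)) <;>
    by_cases e4 : e = ({b, c} : Finset (Fin n)) <;>
    simp_all


theorem quad_inter1 (h0a : 0 < a.val) (hac : a.val < c.val) (hcb : c.val < b.val) :
    ({a, b, 0} : Finset (Fin n)) ∩ {a, b, c} = {a, b} := by
  have hz : ((0 : Fin n)).val = 0 := Fin.val_zero n
  have hbl := b.isLt
  ext t
  simp only [Finset.mem_inter, Finset.mem_insert, Finset.mem_singleton, Fin.ext_iff, hz]
  omega

theorem quad_inter2 (h0a : 0 < a.val) (hac : a.val < c.val) (hcb : c.val < b.val) :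
    ({a, c, 0} : Finset (Fin n)) ∩ {c, b, 0} = {c, 0} := by
  have hz : ((0 : Fin n)).val = 0 := Fin.val_zero n
  have hbl := b.isLt
  ext t
  simp only [Finset.mem_inter, Finset.mem_insert, Finset.mem_singleton, Fin.ext_iff, hz]
  omega

theorem quad_union (h0a : 0 < a.val) (hac : a.val < c.val) (hcb : c.val < b.val) :
    ({a, c, 0} : Finset (Fin n)) ∪ {c, b, 0} = ({a, b, 0} : Finset (Fin n)) ∪ {a, b, c} := by
  have hz : ((0 : Fin n)).val = 0 := Fin.val_zero n
  have hbl := b.isLt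
  ext t
  simp only [Finset.mem_union, Finset.mem_insert, Finset.mem_singleton, Fin.ext_iff, hz]
  omega

end Quad

section FlipCore
variable {n : ℕ} [NeZero n]

theorem flip_core (hn : 3 ≤ n) (M : MAngulation n 3) {a b c : Fin n}
    (hFzm : ({a, b, 0} : Finset (Fin n)) ∈ M.faces)
    (hFcm : ({a, b, c} : Finset (Fin n)) ∈ M.faces)
    (hd : ({a, b} : Finset (Fin n)) ∈ M.diags)
    (hfilter : (M.faces.filter fun S => ({a, b} : Finset (Fin n)) ∈ polyEdges S)
      = {({a, b, 0} : Finset (Fin n)), ({a, b, c} : Finset (Fin n))})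
    (h0a : 0 < a.val) (hac : a.val < c.val) (hcb : c.val < b.val) :
    ∃ M'' : MAngulation n 3, IsFlip M M'' ∧ IsFlip M'' M ∧
      (M''.diags.filter fun e => (0 : Fin n) ∉ e).card <
        (M.diags.filter fun e => (0 : Fin n) ∉ e).card := by
  obtain ⟨na0, nb0, nc0, nab, nac, ncb⟩ := quad_ne h0a hac hcb
  obtain ⟨cFz, cFc, cA, cB⟩ := quad_card h0a hac hcb
  have hz : ((0 : Fin n)).val = 0 := Fin.val_zero n
  have hbl := b.isLt
  have hE_ab : ({a, b} : Finset (Fin n)) ∈ M.faces.biUnion polyEdges :=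
    M.edge_mem hFzm (mem_polyEdges_pair cFz (by simp) (by simp) nab)
  have hE_a0 : ({a, 0} : Finset (Fin n)) ∈ M.faces.biUnion polyEdges :=
    M.edge_mem hFzm (mem_polyEdges_pair cFz (by simp) (by simp) na0)
  have hE_b0 : ({b, 0} : Finset (Fin n)) ∈ M.faces.biUnion polyEdges :=
    M.edge_mem hFzm (mem_polyEdges_pair cFz (by simp) (by simp) nb0)
  have hE_ac : ({a, c} : Finset (Fin n)) ∈ M.faces.biUnion polyEdges :=
    M.edge_mem hFcm (mem_polyEdges_pair cFc (by simp) (by simp) nac)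
  have hE_bc : ({b, c} : Finset (Fin n)) ∈ M.faces.biUnion polyEdges :=
    M.edge_mem hFcm (mem_polyEdges_pair cFc (by simp) (by simp) ncb.symm)
  have hcross0c : edgesCross ({c, 0} : Finset (Fin n)) {a, b} := by
    rw [Finset.pair_comm c 0]; exact cross_0c_ab h0a hac hcb
  have hc0E : ({c, 0} : Finset (Fin n)) ∉ M.faces.biUnion polyEdges :=
    fun h => M.noncross _ h _ hE_ab hcross0c
  have hc0bd : ({c, 0} : Finset (Fin n)) ∉ boundaryEdges n := by
    intro h
    rcases mem_boundary_iff.mp h with h' | h'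
    · have h2 := congrArg Fin.val h'
      rw [add_one_val hn, hz] at h2
      split_ifs at h2 <;> omega
    · have h2 := congrArg Fin.val h'
      rw [add_one_val hn, hz] at h2
      split_ifs at h2 <;> omega
  have hAF : ({a, c, 0} : Finset (Fin n)) ∉ M.faces := fun h =>
    hc0E (M.edge_mem h (mem_polyEdges_pair cA (by simp) (by simp) nc0))
  have hBF : ({c, b, 0} : Finset (Fin n)) ∉ M.faces := fun h =>
    hc0E (M.edge_mem h (mem_polyEdges_pair cB (by simp) (by simp) nc0))
  have hFzFc : ({a, b, 0} : Finset (Fin n)) ≠ {a, b, c} := by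
    intro h
    have h2 := Finset.ext_iff.mp h 0
    simp only [Finset.mem_insert, Finset.mem_singleton, Fin.ext_iff, hz, or_true, true_or, true_iff, iff_true] at h2
    omega
  have hABne : ({a, c, 0} : Finset (Fin n)) ≠ {c, b, 0} := by
    intro h
    have h2 := Finset.ext_iff.mp h a
    simp only [Finset.mem_insert, Finset.mem_singleton, Fin.ext_iff, hz, or_true, true_or, true_iff, iff_true] at h2
    omega
  have honly : ∀ S ∈ M.faces, ({a, b} : Finset (Fin n)) ∈ polyEdges S →
      S = {a, b, 0} ∨ S = {a, b, c} := by
    intro S hS hSe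
    have h2 : S ∈ M.faces.filter fun S => ({a, b} : Finset (Fin n)) ∈ polyEdges S :=
      Finset.mem_filter.mpr ⟨hS, hSe⟩
    rw [hfilter] at h2
    simpa using h2
  set Nf := (M.faces \ {({a, b, 0} : Finset (Fin n)), ({a, b, c} : Finset (Fin n))}) ∪
      {({a, c, 0} : Finset (Fin n)), ({c, b, 0} : Finset (Fin n))} with hNf
  have hEnew : ∀ e ∈ Nf.biUnion polyEdges,
      (e ∈ M.faces.biUnion polyEdges ∧ e ≠ {a, b}) ∨ e = ({c, 0} : Finset (Fin n)) := by
    intro e he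
    obtain ⟨S, hS, heS⟩ := Finset.mem_biUnion.mp he
    rw [hNf, Finset.mem_union] at hS
    rcases hS with hS | hS
    · rw [Finset.mem_sdiff] at hS
      refine Or.inl ⟨M.edge_mem hS.1 heS, ?_⟩
      rintro rfl
      rcases honly S hS.1 heS with h | h <;>
        exact hS.2 (by simp [h])
    · simp only [Finset.mem_insert, Finset.mem_singleton] at hS
      rcases hS with rfl | rfl
      · rw [mem_polyEdges_iff cA] at heS
        rcases pair_subset_triple heS.1 heS.2 with h | h | h
        · subst h; exact Or.inl ⟨hE_ac, pair_ne_pair (fun _ h => ncb h) (fun h _ => nab h)⟩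
        · subst h; exact Or.inl ⟨hE_a0, pair_ne_pair (fun _ h => nb0 h.symm) (fun h _ => nab h)⟩
        · exact Or.inr h
      · rw [mem_polyEdges_iff cB] at heS
        rcases pair_subset_triple heS.1 heS.2 with h | h | h
        · rw [Finset.pair_comm] at h
          subst h
          exact Or.inl ⟨hE_bc, pair_ne_pair (fun h _ => nab h.symm) (fun _ h => nac h.symm)⟩
        · exact Or.inr h
        · subst h; exact Or.inl ⟨hE_b0, pair_ne_pair (fun h _ => nab h.symm) (fun _ h => na0 h.symm)⟩
  have hcf : ∀ S ∈ Nf, S.card = 3 := by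
    intro S hS
    rw [hNf, Finset.mem_union] at hS
    rcases hS with hS | hS
    · exact M.card_face S (Finset.mem_sdiff.mp hS).1
    · simp only [Finset.mem_insert, Finset.mem_singleton] at hS
      rcases hS with rfl | rfl
      · exact cA
      · exact cB
  have hcount : ∀ e : Finset (Fin n),
      (Nf.filter fun S => e ∈ polyEdges S).card
        + ((({({a, b, 0} : Finset (Fin n)), ({a, b, c} : Finset (Fin n))} :
            Finset (Finset (Fin n)))).filter fun S => e ∈ polyEdges S).card
      = (M.faces.filter fun S => e ∈ polyEdges S).card
        + ((({({a, c, 0} : Finset (Fin n)), ({c, b, 0} : Finset (Fin n))} :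
            Finset (Finset (Fin n)))).filter fun S => e ∈ polyEdges S).card := by
    intro e
    rw [hNf]
    exact count_split M.faces _ _ _ _ hFzm hFcm hAF hBF _
  have hbo : ∀ i : Fin n,
      (Nf.filter fun S => ({i, i + 1} : Finset (Fin n)) ∈ polyEdges S).card = 1 := by
    intro i
    have hbd : ({i, i + 1} : Finset (Fin n)) ∈ boundaryEdges n :=
      Finset.mem_image.mpr ⟨i, Finset.mem_univ i, rfl⟩
    have he2 : ({i, i + 1} : Finset (Fin n)).card = 2 :=
      Finset.card_pair (fin_succ_ne_self hn i).symm
    have hea : ({i, i + 1} : Finset (Fin n)) ≠ {a, b} := fun h =>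
      (M.diag_spec hd).2 (h ▸ hbd)
    have hec : ({i, i + 1} : Finset (Fin n)) ≠ ({c, 0} : Finset (Fin n)) := fun h =>
      hc0bd (h ▸ hbd)
    have hbal := count_balance' h0a hac hcb he2 hea hec
    have hcnt := hcount {i, i + 1}
    have h1 := M.boundary_once i
    omega
  have hie : ∀ e : Finset (Fin n), e.card = 2 → e ∉ boundaryEdges n →
      (Nf.filter fun S => e ∈ polyEdges S).card = 0 ∨
      (Nf.filter fun S => e ∈ polyEdges S).card = 2 := by
    intro e he2 hebd
    by_cases hea : e = ({a, b} : Finset (Fin n))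
    · subst hea
      left
      have hcnt := hcount {a, b}
      have hM2 : (M.faces.filter fun S =>
          ({a, b} : Finset (Fin n)) ∈ polyEdges S).card = 2 := by
        rw [hfilter]; exact Finset.card_pair hFzFc
      have hnA : ({a, b} : Finset (Fin n)) ∉ polyEdges ({a, c, 0} : Finset (Fin n)) := by
        rw [mem_polyEdges_iff cA]
        rintro ⟨hsub, -⟩
        have h2 := hsub (Finset.mem_insert_of_mem (Finset.mem_singleton_self b))
        simp only [Finset.mem_insert, Finset.mem_singleton, Fin.ext_iff, hz, or_true, true_or, true_iff, iff_true] at h2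
        omega
      have hnB : ({a, b} : Finset (Fin n)) ∉ polyEdges ({c, b, 0} : Finset (Fin n)) := by
        rw [mem_polyEdges_iff cB]
        rintro ⟨hsub, -⟩
        have h2 := hsub (Finset.mem_insert_self a {b})
        simp only [Finset.mem_insert, Finset.mem_singleton, Fin.ext_iff, hz, or_true, true_or, true_iff, iff_true] at h2
        omega
      have hold : ((({({a, b, 0} : Finset (Fin n)), ({a, b, c} : Finset (Fin n))} :
          Finset (Finset (Fin n)))).filter fun S =>
            ({a, b} : Finset (Fin n)) ∈ polyEdges S).card = 2 := by
        rw [count_pair _ _ hFzFc,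
          if_pos (mem_polyEdges_pair cFz (by simp) (by simp) nab),
          if_pos (mem_polyEdges_pair cFc (by simp) (by simp) nab)]
      have hnew : ((({({a, c, 0} : Finset (Fin n)), ({c, b, 0} : Finset (Fin n))} :
          Finset (Finset (Fin n)))).filter fun S =>
            ({a, b} : Finset (Fin n)) ∈ polyEdges S).card = 0 := by
        rw [count_pair _ _ hABne, if_neg hnA, if_neg hnB]
      omega
    · by_cases hec : e = ({c, 0} : Finset (Fin n))
      · subst hec
        right
        have hcnt := hcount {c, 0}
        have hM0 : (M.faces.filter fun S =>
            ({c, 0} : Finset (Fin n)) ∈ polyEdges S).card = 0 := by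
          rw [Finset.card_eq_zero, Finset.filter_eq_empty_iff]
          intro S hS hmem
          exact hc0E (M.edge_mem hS hmem)
        have hnFz : ({c, 0} : Finset (Fin n)) ∉ polyEdges ({a, b, 0} : Finset (Fin n)) := by
          rw [mem_polyEdges_iff cFz]
          rintro ⟨hsub, -⟩
          have h2 := hsub (Finset.mem_insert_self c {0})
          simp only [Finset.mem_insert, Finset.mem_singleton, Fin.ext_iff, hz, or_true, true_or, true_iff, iff_true] at h2
          omega
        have hnFc : ({c, 0} : Finset (Fin n)) ∉ polyEdges ({a, b, c} : Finset (Fin n)) := by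
          rw [mem_polyEdges_iff cFc]
          rintro ⟨hsub, -⟩
          have h2 := hsub (Finset.mem_insert_of_mem (Finset.mem_singleton_self 0))
          simp only [Finset.mem_insert, Finset.mem_singleton, Fin.ext_iff, hz, or_true, true_or, true_iff, iff_true] at h2
          omega
        have hold : ((({({a, b, 0} : Finset (Fin n)), ({a, b, c} : Finset (Fin n))} :
            Finset (Finset (Fin n)))).filter fun S =>
              ({c, 0} : Finset (Fin n)) ∈ polyEdges S).card = 0 := by
          rw [count_pair _ _ hFzFc, if_neg hnFz, if_neg hnFc]
        have hnew : ((({({a, c, 0} : Finset (Fin n)), ({c, b, 0} : Finset (Fin n))} :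
            Finset (Finset (Fin n)))).filter fun S =>
              ({c, 0} : Finset (Fin n)) ∈ polyEdges S).card = 2 := by
          rw [count_pair _ _ hABne,
            if_pos (mem_polyEdges_pair cA (by simp) (by simp) nc0),
            if_pos (mem_polyEdges_pair cB (by simp) (by simp) nc0)]
        omega
      · have hbal := count_balance' h0a hac hcb he2 hea hec
        have hcnt := hcount e
        rcases M.internal_even e he2 hebd with h | h
        · left; omega
        · right; omega
  have hsafe : ∀ g ∈ M.faces.biUnion polyEdges, g ≠ ({a, b} : Finset (Fin n)) →
      ¬ edgesCross g ({c, 0} : Finset (Fin n)) := by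
    intro g hg hgne
    obtain ⟨x, y, hxy, rfl⟩ := Finset.card_eq_two.mp (M.edge_spec hg).1
    rw [Finset.pair_comm c 0]
    refine noncross_new h0a hac hcb hxy ?_ ?_ ?_ ?_ ?_ hgne
    · exact M.noncross _ hg _ (by rw [Finset.pair_comm 0 a]; exact hE_a0)
    · exact M.noncross _ hg _ (by rw [Finset.pair_comm 0 b]; exact hE_b0)
    · exact M.noncross _ hg _ hE_ac
    · exact M.noncross _ hg _ (by rw [Finset.pair_comm c b]; exact hE_bc)
    · exact M.noncross _ hg _ hE_ab
  have hnc : ∀ e ∈ Nf.biUnion polyEdges, ∀ f ∈ Nf.biUnion polyEdges, ¬ edgesCross e f := by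
    intro e he f hf
    rcases hEnew e he with ⟨heE, hene⟩ | rfl <;> rcases hEnew f hf with ⟨hfE, hfne⟩ | heq
    · exact M.noncross e heE f hfE
    · rw [heq]; exact hsafe e heE hene
    · exact fun h => hsafe f hfE hfne h.symm
    · rw [heq]
      intro h
      have hdis := h.disjoint
      exact (Finset.disjoint_left.mp hdis
        (by simp : (0 : Fin n) ∈ ({c, 0} : Finset (Fin n)))) (by simp)
  refine ⟨⟨Nf, hcf, hbo, hie, hnc⟩, ?_, ?_, ?_⟩
  · refine ⟨{a, b, 0}, {a, b, c}, {a, c, 0}, {c, b, 0}, hFzm, hFcm, hFzFc,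
      ⟨{a, b}, hd, mem_polyEdges_pair cFz (by simp) (by simp) nab,
        mem_polyEdges_pair cFc (by simp) (by simp) nab⟩, ?_, cA, cB, ?_, ?_, ?_, hNf⟩
    · rw [quad_inter1 h0a hac hcb]; exact Finset.card_pair nab
    · exact quad_union h0a hac hcb
    · rw [quad_inter2 h0a hac hcb]; exact Finset.card_pair nc0
    · intro h
      have hA : ({a, c, 0} : Finset (Fin n)) ∈
          ({({a, b, 0} : Finset (Fin n)), ({a, b, c} : Finset (Fin n))} :
            Finset (Finset (Fin n))) := by
        rw [← h]; exact Finset.mem_insert_self _ _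
      simp only [Finset.mem_insert, Finset.mem_singleton] at hA
      rcases hA with h' | h'
      · have h2 := Finset.ext_iff.mp h' c
        simp only [Finset.mem_insert, Finset.mem_singleton, Fin.ext_iff, hz, or_true, true_or, true_iff, iff_true] at h2
        omega
      · have h2 := Finset.ext_iff.mp h' 0
        simp only [Finset.mem_insert, Finset.mem_singleton, Fin.ext_iff, hz, or_true, true_or, true_iff, iff_true] at h2
        omega
  · have hAmem : ({a, c, 0} : Finset (Fin n)) ∈ Nf := by
      rw [hNf]; exact Finset.mem_union_right _ (Finset.mem_insert_self _ _)
    have hBmem : ({c, b, 0} : Finset (Fin n)) ∈ Nf := by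
      rw [hNf]
      exact Finset.mem_union_right _ (Finset.mem_insert_of_mem (Finset.mem_singleton_self _))
    have hd' : ({c, 0} : Finset (Fin n)) ∈
        (MAngulation.mk Nf hcf hbo hie hnc : MAngulation n 3).diags :=
      Finset.mem_sdiff.mpr ⟨Finset.mem_biUnion.mpr
        ⟨{a, c, 0}, hAmem, mem_polyEdges_pair cA (by simp) (by simp) nc0⟩, hc0bd⟩
    refine ⟨{a, c, 0}, {c, b, 0}, {a, b, 0}, {a, b, c}, hAmem, hBmem, hABne,
      ⟨{c, 0}, hd', mem_polyEdges_pair cA (by simp) (by simp) nc0,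
        mem_polyEdges_pair cB (by simp) (by simp) nc0⟩, ?_, cFz, cFc, ?_, ?_, ?_, ?_⟩
    · rw [quad_inter2 h0a hac hcb]; exact Finset.card_pair nc0
    · exact (quad_union h0a hac hcb).symm
    · rw [quad_inter1 h0a hac hcb]; exact Finset.card_pair nab
    · intro h
      have hA : ({a, b, 0} : Finset (Fin n)) ∈
          ({({a, c, 0} : Finset (Fin n)), ({c, b, 0} : Finset (Fin n))} :
            Finset (Finset (Fin n))) := by
        rw [← h]; exact Finset.mem_insert_self _ _
      simp only [Finset.mem_insert, Finset.mem_singleton] at hA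
      rcases hA with h' | h'
      · have h2 := Finset.ext_iff.mp h' b
        simp only [Finset.mem_insert, Finset.mem_singleton, Fin.ext_iff, hz, or_true, true_or, true_iff, iff_true] at h2
        omega
      · have h2 := Finset.ext_iff.mp h' a
        simp only [Finset.mem_insert, Finset.mem_singleton, Fin.ext_iff, hz, or_true, true_or, true_iff, iff_true] at h2
        omega
    · show M.faces = (Nf \ {({a, c, 0} : Finset (Fin n)), ({c, b, 0} : Finset (Fin n))}) ∪
        {({a, b, 0} : Finset (Fin n)), ({a, b, c} : Finset (Fin n))}
      ext S
      simp only [hNf, Finset.mem_union, Finset.mem_sdiff, Finset.mem_insert,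
        Finset.mem_singleton]
      constructor
      · intro hS
        by_cases h1 : S = {a, b, 0}
        · exact Or.inr (Or.inl h1)
        by_cases h2 : S = {a, b, c}
        · exact Or.inr (Or.inr h2)
        refine Or.inl ⟨Or.inl ⟨hS, ?_⟩, ?_⟩
        · tauto
        · rintro (rfl | rfl)
          exacts [hAF hS, hBF hS]
      · rintro (⟨⟨hS, -⟩ | h, hne⟩ | (rfl | rfl))
        · exact hS
        · exact absurd h hne
        · exact hFzm
        · exact hFcm
  · have hdmem : ({a, b} : Finset (Fin n)) ∈ M.diags.filter fun e => (0 : Fin n) ∉ e := by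
      refine Finset.mem_filter.mpr ⟨hd, ?_⟩
      simp only [Finset.mem_insert, Finset.mem_singleton]
      push_neg
      exact ⟨fun h => na0 h.symm, fun h => nb0 h.symm⟩
    have hsub2 : ((MAngulation.mk Nf hcf hbo hie hnc : MAngulation n 3).diags.filter
        fun e => (0 : Fin n) ∉ e) ⊆
        (M.diags.filter fun e => (0 : Fin n) ∉ e).erase {a, b} := by
      intro x hx
      rw [Finset.mem_filter] at hx
      obtain ⟨hx1, hx2⟩ := hx
      have hx1' := Finset.mem_sdiff.mp hx1
      rcases hEnew x hx1'.1 with ⟨hE, hne⟩ | heq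
      · exact Finset.mem_erase.mpr ⟨hne,
          Finset.mem_filter.mpr ⟨Finset.mem_sdiff.mpr ⟨hE, hx1'.2⟩, hx2⟩⟩
      · rw [heq] at hx2
        exact absurd (by simp : (0 : Fin n) ∈ ({c, 0} : Finset (Fin n))) hx2
    have hle := Finset.card_le_card hsub2
    rw [Finset.card_erase_of_mem hdmem] at hle
    have hpos := Finset.card_pos.mpr ⟨_, hdmem⟩
    omega


theorem flip_step (hn : 3 ≤ n) (M : MAngulation n 3)
    (hex : ∃ d ∈ M.diags, (0 : Fin n) ∉ d) :
    ∃ M'' : MAngulation n 3, IsFlip M M'' ∧ IsFlip M'' M ∧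
      (M''.diags.filter fun e => (0 : Fin n) ∉ e).card <
        (M.diags.filter fun e => (0 : Fin n) ∉ e).card := by
  have hz : ((0 : Fin n)).val = 0 := Fin.val_zero n
  classical
  set P := (Finset.univ ×ˢ Finset.univ).filter
    (fun p : Fin n × Fin n => ({p.1, p.2} : Finset (Fin n)) ∈ M.diags ∧
      0 < p.1.val ∧ p.1.val < p.2.val) with hP
  have hPmem : ∀ p : Fin n × Fin n, p ∈ P ↔ ({p.1, p.2} : Finset (Fin n)) ∈ M.diags ∧
      0 < p.1.val ∧ p.1.val < p.2.val := by
    intro p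
    rw [hP, Finset.mem_filter]
    simp [Finset.mem_product]
  have hPne : P.Nonempty := by
    obtain ⟨d, hd, h0d⟩ := hex
    obtain ⟨x, y, hxy, rfl⟩ := Finset.card_eq_two.mp (M.edge_spec (M.diag_spec hd).1).1
    simp only [Finset.mem_insert, Finset.mem_singleton] at h0d
    push_neg at h0d
    have hx0 : 0 < x.val :=
      Nat.pos_of_ne_zero (fun h => h0d.1 (Fin.ext (by rw [h, hz])))
    have hy0 : 0 < y.val :=
      Nat.pos_of_ne_zero (fun h => h0d.2 (Fin.ext (by rw [h, hz])))
    have hvne : x.val ≠ y.val := fun h => hxy (Fin.ext h)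
    rcases lt_or_gt_of_ne hvne with h | h
    · exact ⟨(x, y), (hPmem (x, y)).mpr ⟨hd, hx0, h⟩⟩
    · refine ⟨(y, x), (hPmem (y, x)).mpr ⟨?_, hy0, h⟩⟩
      rw [Finset.pair_comm]
      exact hd
  obtain ⟨p, hp, hmax⟩ := Finset.exists_max_image P (fun p => p.2.val - p.1.val) hPne
  obtain ⟨hdiag, h0a, hvab⟩ := (hPmem p).mp hp
  set a := p.1
  set b := p.2
  have nab : a ≠ b := Fin.ne_of_val_ne (by omega)
  have hbl := b.isLt
  obtain ⟨F₁, F₂, hF1, hF2, hne12, hfilt⟩ := M.two_faces (M.diag_spec hdiag).1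
    (M.diag_spec hdiag).2
  have hm1 : ({a, b} : Finset (Fin n)) ∈ polyEdges F₁ := by
    have h1 : F₁ ∈ M.faces.filter fun S => ({a, b} : Finset (Fin n)) ∈ polyEdges S := by
      rw [hfilt]; exact Finset.mem_insert_self _ _
    exact (Finset.mem_filter.mp h1).2
  have hm2 : ({a, b} : Finset (Fin n)) ∈ polyEdges F₂ := by
    have h1 : F₂ ∈ M.faces.filter fun S => ({a, b} : Finset (Fin n)) ∈ polyEdges S := by
      rw [hfilt]; exact Finset.mem_insert_of_mem (Finset.mem_singleton_self _)
    exact (Finset.mem_filter.mp h1).2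
  have h31 := M.card_face F₁ hF1
  have h32 := M.card_face F₂ hF2
  have hsub1 := ((mem_polyEdges_iff h31).mp hm1).1
  have hsub2 := ((mem_polyEdges_iff h32).mp hm2).1
  obtain ⟨c₁, hr1, hc1a, hc1b⟩ :=
    triple_repr h31 (hsub1 (by simp)) (hsub1 (by simp)) nab
  obtain ⟨c₂, hr2, hc2a, hc2b⟩ :=
    triple_repr h32 (hsub2 (by simp)) (hsub2 (by simp)) nab
  -- position of the apex of any face on {a, b}
  have hpos : ∀ (F : Finset (Fin n)) (cf : Fin n), F ∈ M.faces → F = {a, b, cf} →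
      cf ≠ a → cf ≠ b → cf = 0 ∨ (a.val < cf.val ∧ cf.val < b.val) := by
    intro F cf hF hFr hcfa hcfb
    by_contra hcon
    push_neg at hcon
    obtain ⟨hcf0, hcfI⟩ := hcon
    have hcf0' : 0 < cf.val :=
      Nat.pos_of_ne_zero (fun h => hcf0 (Fin.ext (by rw [h, hz])))
    have hcfa' : cf.val ≠ a.val := fun h => hcfa (Fin.ext h)
    have hcfb' : cf.val ≠ b.val := fun h => hcfb (Fin.ext h)
    have hF3 := M.card_face F hF
    have hcfl := cf.isLt
    rcases (by omega : cf.val < a.val ∨ b.val < cf.val) with hlt | hlt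
    · -- the chord {cf, b} beats {a, b}
      have hEcb : ({cf, b} : Finset (Fin n)) ∈ M.faces.biUnion polyEdges :=
        M.edge_mem hF (mem_polyEdges_pair hF3 (by rw [hFr]; simp) (by rw [hFr]; simp) hcfb)
      have hbd : ({cf, b} : Finset (Fin n)) ∉ boundaryEdges n := by
        intro h
        rcases mem_boundary_iff.mp h with h' | h'
        · have h2 := congrArg Fin.val h'
          rw [add_one_val hn] at h2
          split_ifs at h2 <;> omega
        · have h2 := congrArg Fin.val h'
          rw [add_one_val hn] at h2
          split_ifs at h2 <;> omega
      have hmem : (cf, b) ∈ P := (hPmem (cf, b)).mpr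
        ⟨Finset.mem_sdiff.mpr ⟨hEcb, hbd⟩, hcf0', show cf.val < b.val by omega⟩
      have hq : b.val - cf.val ≤ b.val - a.val := hmax (cf, b) hmem
      omega
    · -- the chord {a, cf} beats {a, b}
      have hEac : ({a, cf} : Finset (Fin n)) ∈ M.faces.biUnion polyEdges :=
        M.edge_mem hF (mem_polyEdges_pair hF3 (by rw [hFr]; simp) (by rw [hFr]; simp)
          (Ne.symm hcfa))
      have hbd : ({a, cf} : Finset (Fin n)) ∉ boundaryEdges n := by
        intro h
        rcases mem_boundary_iff.mp h with h' | h'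
        · have h2 := congrArg Fin.val h'
          rw [add_one_val hn] at h2
          split_ifs at h2 <;> omega
        · have h2 := congrArg Fin.val h'
          rw [add_one_val hn] at h2
          split_ifs at h2 <;> omega
      have hmem : (a, cf) ∈ P := (hPmem (a, cf)).mpr
        ⟨Finset.mem_sdiff.mpr ⟨hEac, hbd⟩, h0a, show a.val < cf.val by omega⟩
      have hq : cf.val - a.val ≤ b.val - a.val := hmax (a, cf) hmem
      omega
  have hc12 : c₁ ≠ c₂ := by
    intro h
    exact hne12 (by rw [hr1, hr2, h])
  -- not both apexes strictly inside (a, b)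
  have hfar : ¬ ((a.val < c₁.val ∧ c₁.val < b.val) ∧ (a.val < c₂.val ∧ c₂.val < b.val)) := by
    rintro ⟨h1, h2⟩
    have hv12 : c₁.val ≠ c₂.val := fun h => hc12 (Fin.ext h)
    -- wlog c₁.val < c₂.val; otherwise swap
    have core : ∀ (G₁ G₂ : Finset (Fin n)) (d₁ d₂ : Fin n), G₁ ∈ M.faces → G₂ ∈ M.faces →
        G₁ = {a, b, d₁} → G₂ = {a, b, d₂} →
        a.val < d₁.val → d₁.val < d₂.val → d₂.val < b.val → False := by
      intro G₁ G₂ d₁ d₂ hG1 hG2 hGr1 hGr2 hx1 hx2 hx3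
      have hg1 := M.card_face G₁ hG1
      have hg2 := M.card_face G₂ hG2
      have hE1 : ({d₁, b} : Finset (Fin n)) ∈ M.faces.biUnion polyEdges :=
        M.edge_mem hG1 (mem_polyEdges_pair hg1 (by rw [hGr1]; simp) (by rw [hGr1]; simp)
          (Fin.ne_of_val_ne (by omega)))
      have hE2 : ({a, d₂} : Finset (Fin n)) ∈ M.faces.biUnion polyEdges :=
        M.edge_mem hG2 (mem_polyEdges_pair hg2 (by rw [hGr2]; simp) (by rw [hGr2]; simp)
          (Fin.ne_of_val_ne (by omega)))
      refine M.noncross _ hE2 _ hE1 ?_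
      rw [cross_pair_iff (Fin.ne_of_val_ne (by omega : a.val ≠ d₂.val))
        (Fin.ne_of_val_ne (by omega : d₁.val ≠ b.val))]
      left
      constructor <;> (rw [strictBtwn_val_iff]; omega)
    rcases lt_or_gt_of_ne hv12 with h | h
    · exact core F₁ F₂ c₁ c₂ hF1 hF2 hr1 hr2 h1.1 h h2.2
    · exact core F₂ F₁ c₂ c₁ hF2 hF1 hr2 hr1 h2.1 h h1.2
  rcases hpos F₁ c₁ hF1 hr1 hc1a hc1b with hc1 | hc1 <;>
    rcases hpos F₂ c₂ hF2 hr2 hc2a hc2b with hc2 | hc2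
  · exact absurd (hc1.trans hc2.symm) hc12
  · -- F₁ = {a,b,0}, F₂ = {a,b,c₂}
    subst hc1
    rw [hr1, hr2] at hfilt
    exact flip_core hn M (hr1 ▸ hF1) (hr2 ▸ hF2) hdiag hfilt h0a hc2.1 hc2.2
  · -- F₂ = {a,b,0}, F₁ = {a,b,c₁}
    subst hc2
    rw [hr1, hr2, Finset.pair_comm ({a, b, c₁} : Finset (Fin n)) {a, b, 0}] at hfilt
    exact flip_core hn M (hr2 ▸ hF2) (hr1 ▸ hF1) hdiag hfilt h0a hc1.1 hc1.2
  · exact absurd ⟨hc1, hc2⟩ hfar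

end FlipCore


theorem reach_fan {n : ℕ} [NeZero n] (hn : 3 ≤ n) :
    ∀ (k : ℕ) (M : MAngulation n 3),
      (M.diags.filter fun e => (0 : Fin n) ∉ e).card ≤ k →
      ∃ N : MAngulation n 3, Relation.ReflTransGen IsFlip M N ∧
        Relation.ReflTransGen IsFlip N M ∧
        (N.diags.filter fun e => (0 : Fin n) ∉ e).card = 0 := by
  intro k
  induction k with
  | zero =>
    intro M hM
    exact ⟨M, Relation.ReflTransGen.refl, Relation.ReflTransGen.refl, Nat.le_zero.mp hM⟩
  | succ k ih =>
    intro M hM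
    by_cases h0 : (M.diags.filter fun e => (0 : Fin n) ∉ e).card = 0
    · exact ⟨M, Relation.ReflTransGen.refl, Relation.ReflTransGen.refl, h0⟩
    · have hex : ∃ d ∈ M.diags, (0 : Fin n) ∉ d := by
        have hne : (M.diags.filter fun e => (0 : Fin n) ∉ e).Nonempty :=
          Finset.card_pos.mp (Nat.pos_of_ne_zero h0)
        obtain ⟨d, hd⟩ := hne
        rw [Finset.mem_filter] at hd
        exact ⟨d, hd.1, hd.2⟩
      obtain ⟨M'', h1, h2, hlt⟩ := flip_step hn M hex
      obtain ⟨N, g1, g2, g3⟩ := ih M'' (by omega)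
      exact ⟨N, (Relation.ReflTransGen.single h1).trans g1,
        g2.trans (Relation.ReflTransGen.single h2), g3⟩

/-- Any two triangulations of a convex polygon with `n` vertices are connected by a finite
sequence of diagonal flips. -/
theorem triangulations_flip_connected (n : ℕ) [NeZero n] (hn : 3 ≤ n)
    (M M' : MAngulation n 3) :
    Relation.ReflTransGen IsFlip M M' := by
  obtain ⟨N, a1, a2, a3⟩ := reach_fan hn _ M le_rfl
  obtain ⟨N', b1, b2, b3⟩ := reach_fan hn _ M' le_rfl
  have h0N : ∀ d ∈ N.diags, (0 : Fin n) ∈ d := by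
    intro d hd
    by_contra h
    have hmem : d ∈ N.diags.filter fun e => (0 : Fin n) ∉ e :=
      Finset.mem_filter.mpr ⟨hd, h⟩
    rw [Finset.card_eq_zero.mp a3] at hmem
    exact absurd hmem (Finset.notMem_empty d)
  have h0N' : ∀ d ∈ N'.diags, (0 : Fin n) ∈ d := by
    intro d hd
    by_contra h
    have hmem : d ∈ N'.diags.filter fun e => (0 : Fin n) ∉ e :=
      Finset.mem_filter.mpr ⟨hd, h⟩
    rw [Finset.card_eq_zero.mp b3] at hmem
    exact absurd hmem (Finset.notMem_empty d)
  have hNN : N = N' := fan_unique hn N N' h0N h0N'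
  exact a1.trans (hNN ▸ b2)
end
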